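/- Let Γ be a group and r ∈ ℕ with r ≤ genrk(Γ). Then there exists a finitely generated subgroup Λ_r of Γ such that intrk^Γ(Λ_r) = r. -/

import Mathlib

open scoped commutatorElement

/-- The mixed commutator length `cl_{G,N}` (∞ if not a product of mixed commutators). -/
noncomputable def clGN {G : Type*} [Group G] (N : Subgroup G) (x : G) : ℕ∞ :=
  sInf {n : ℕ∞ | ∃ k : ℕ, n = k ∧ ∃ g v : Fin k → G, (∀ i, v i ∈ N) ∧
    x = (List.ofFn fun i => ⁅g i, v i⁆).prod}

/-- The rank of a subgroup: minimal size of a generating set. -/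
noncomputable def rk {G : Type*} [Group G] (H : Subgroup G) : ℕ∞ :=
  sInf {n : ℕ∞ | ∃ S : Finset G, Subgroup.closure (S : Set G) = H ∧ n = S.card}

/-- The intermediate rank `intrk^Γ(Λ) = inf {rk Θ | Λ ≤ Θ ≤ Γ}`. -/
noncomputable def intrk {G : Type*} [Group G] (Λ : Subgroup G) : ℕ∞ :=
  sInf {n : ℕ∞ | ∃ Θ : Subgroup G, Λ ≤ Θ ∧ n = rk Θ}

/-- The general rank in the sense of Malcev. -/
noncomputable def genrk (G : Type*) [Group G] : ℕ∞ :=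
  sSup {n : ℕ∞ | ∃ Λ : Subgroup G, Λ.FG ∧ n = intrk Λ}

/-- The special rank in the sense of Malcev. -/
noncomputable def sperk (G : Type*) [Group G] : ℕ∞ :=
  sSup {n : ℕ∞ | ∃ Λ : Subgroup G, Λ.FG ∧ n = rk Λ}

/-!
Adjoining one generator raises the rank of a subgroup by at most one, hence also the
intermediate rank: enlarge an optimal intermediate subgroup by the new generator. Starting from
the trivial subgroup and adding the generators of a finitely generated `Λ` one at a time, the
intermediate rank therefore climbs from `0` to `intrk Λ` without skipping a value.
-/

theorem ENat.exists_coe_le_of_coe_le_sSup {s : Set ℕ∞} {n : ℕ} (h : (n : ℕ∞) ≤ sSup s)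
    (hs : s.Nonempty) : ∃ a ∈ s, (n : ℕ∞) ≤ a := by
  cases n with
  | zero =>
    obtain ⟨a, ha⟩ := hs
    exact ⟨a, ha, by simp⟩
  | succ k =>
    obtain ⟨a, ha, hka⟩ := exists_lt_of_lt_csSup' ((Nat.cast_lt.2 k.lt_succ_self).trans_le h)
    exact ⟨a, ha, by simpa using Order.add_one_le_of_lt hka⟩

theorem Finset.exists_subset_eq_of_coe_le {α : Type*} [DecidableEq α] (f : Finset α → ℕ∞)
    (h_empty : f ∅ = 0) (h_insert : ∀ x s, f (insert x s) ≤ f s + 1) (s : Finset α) {m : ℕ}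
    (hm : (m : ℕ∞) ≤ f s) : ∃ t ⊆ s, f t = m := by
  induction s using Finset.induction_on with
  | empty => exact ⟨∅, subset_rfl, by simp_all⟩
  | insert x s _ ih =>
    by_cases hs : (m : ℕ∞) ≤ f s
    · obtain ⟨t, hts, ht⟩ := ih hs
      exact ⟨t, hts.trans (subset_insert x s), ht⟩
    · exact ⟨insert x s, subset_rfl,
        le_antisymm ((h_insert x s).trans (Order.add_one_le_of_lt (not_le.1 hs))) hm⟩

section Rank

variable {G : Type*} [Group G]

theorem Subgroup.closure_insert_eq_sup_zpowers (x : G) (s : Set G) :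
    Subgroup.closure (insert x s) = Subgroup.closure s ⊔ Subgroup.zpowers x := by
  rw [Set.insert_eq, Subgroup.closure_union, Subgroup.zpowers_eq_closure, sup_comm]

theorem rk_closure_le_card (S : Finset G) : rk (Subgroup.closure (S : Set G)) ≤ S.card :=
  sInf_le ⟨S, rfl, rfl⟩

theorem exists_closure_eq_card_eq_rk {H : Subgroup G} (h : rk H ≠ ⊤) :
    ∃ S : Finset G, Subgroup.closure (S : Set G) = H ∧ (S.card : ℕ∞) = rk H := by
  have hne : Set.Nonempty
      {n : ℕ∞ | ∃ S : Finset G, Subgroup.closure (S : Set G) = H ∧ n = S.card} :=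
    Set.nonempty_iff_ne_empty.2 fun he => h (by rw [rk, he, sInf_empty])
  obtain ⟨S, hS, hcard⟩ := csInf_mem hne
  exact ⟨S, hS, hcard.symm⟩

theorem rk_sup_zpowers_le (H : Subgroup G) (x : G) :
    rk (H ⊔ Subgroup.zpowers x) ≤ rk H + 1 := by
  classical
  by_cases htop : rk H = ⊤
  · simp [htop]
  obtain ⟨S, rfl, hcard⟩ := exists_closure_eq_card_eq_rk htop
  calc rk (Subgroup.closure (S : Set G) ⊔ Subgroup.zpowers x)
      = rk (Subgroup.closure ((insert x S : Finset G) : Set G)) := by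
        rw [Finset.coe_insert, Subgroup.closure_insert_eq_sup_zpowers]
    _ ≤ (insert x S).card := rk_closure_le_card _
    _ ≤ S.card + 1 := by exact_mod_cast S.card_insert_le x
    _ = rk (Subgroup.closure (S : Set G)) + 1 := by rw [hcard]

theorem intrk_le_rk {Λ Θ : Subgroup G} (h : Λ ≤ Θ) : intrk Λ ≤ rk Θ :=
  sInf_le ⟨Θ, h, rfl⟩

theorem exists_le_rk_eq_intrk (Λ : Subgroup G) : ∃ Θ, Λ ≤ Θ ∧ rk Θ = intrk Λ := by
  obtain ⟨Θ, hΛΘ, hrk⟩ := csInf_mem (⟨rk Λ, Λ, le_rfl, rfl⟩ :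
    {n : ℕ∞ | ∃ Θ : Subgroup G, Λ ≤ Θ ∧ n = rk Θ}.Nonempty)
  exact ⟨Θ, hΛΘ, hrk.symm⟩

theorem intrk_bot : intrk (⊥ : Subgroup G) = 0 :=
  nonpos_iff_eq_zero.1 <| (intrk_le_rk bot_le).trans <| by
    simpa using rk_closure_le_card (∅ : Finset G)

theorem intrk_sup_zpowers_le (Λ : Subgroup G) (x : G) :
    intrk (Λ ⊔ Subgroup.zpowers x) ≤ intrk Λ + 1 := by
  obtain ⟨Θ, hΛΘ, hrk⟩ := exists_le_rk_eq_intrk Λ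
  calc intrk (Λ ⊔ Subgroup.zpowers x)
      ≤ rk (Θ ⊔ Subgroup.zpowers x) := intrk_le_rk (sup_le_sup_right hΛΘ _)
    _ ≤ rk Θ + 1 := rk_sup_zpowers_le Θ x
    _ = intrk Λ + 1 := by rw [hrk]

theorem intrk_closure_insert_le [DecidableEq G] (x : G) (S : Finset G) :
    intrk (Subgroup.closure ((insert x S : Finset G) : Set G)) ≤
      intrk (Subgroup.closure (S : Set G)) + 1 := by
  rw [Finset.coe_insert, Subgroup.closure_insert_eq_sup_zpowers]
  exact intrk_sup_zpowers_le _ x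

theorem exists_fg_coe_le_intrk_of_coe_le_genrk {r : ℕ} (hr : (r : ℕ∞) ≤ genrk G) :
    ∃ Λ : Subgroup G, Λ.FG ∧ (r : ℕ∞) ≤ intrk Λ := by
  rw [genrk] at hr
  obtain ⟨_, ⟨Λ, hΛ, rfl⟩, hle⟩ :=
    ENat.exists_coe_le_of_coe_le_sSup hr ⟨intrk ⊥, ⊥, ⟨∅, by simp⟩, rfl⟩
  exact ⟨Λ, hΛ, hle⟩

end Rank

/-- every value `r ≤ genrk Γ` is attained as an intermediate rank of a
finitely generated subgroup. -/
theorem exists_fg_subgroup_intrk_eq {Γ : Type*} [Group Γ] (r : ℕ) (hr : (r : ℕ∞) ≤ genrk Γ) :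
    ∃ Λ : Subgroup Γ, Λ.FG ∧ intrk Λ = r := by
  classical
  obtain ⟨Λ, ⟨S, rfl⟩, hle⟩ := exists_fg_coe_le_intrk_of_coe_le_genrk hr
  obtain ⟨T, -, hT⟩ :=
    Finset.exists_subset_eq_of_coe_le (fun T : Finset Γ => intrk (Subgroup.closure (T : Set Γ)))
      (by simp only [Finset.coe_empty, Subgroup.closure_empty, intrk_bot])
      intrk_closure_insert_le S hle
  exact ⟨Subgroup.closure (T : Set Γ), ⟨T, rfl⟩, hT⟩
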